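/- arXiv:1202.4678 — 2 statements merged into one kernel-verified Lean document; each statement's English description precedes it below -/
import Mathlib

section
/- Partial equivalence relations on a fixed set, with the arrow and product constructions, form a Cartesian closed category: objects are PERs, morphisms A→B are equivalence classes of elements in the domain of the arrow PER A→B, identity is the class of λx.x, composition of [t]:A→B and [t']:B→C is [λz. t'(t z)], the product A×B with Church projections is a categorical product, the total relation is terminal, and B^A = A→B with ev = [λx.(π₁ x)(π₂ x)] and Λ([t]) = [λx.λy. t⟨x,y⟩] gives exponentials. -/
/-!
Every clause comes down to β-computation. Each combinator applied to arguments β-reduces to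
the expected term (`idTm u ≈ u`, `π₁ ⟨a, b⟩ ≈ a`, `Λ(f) u v ≈ f ⟨u, v⟩`, …), and a PER
compatible with β-equivalence relates `s` and `s'` as soon as it relates β-equivalent terms
`t` and `t'`. The uniqueness clauses hold because the arrow PER compares morphisms only through
their values, so a morphism into a product is determined by its two components, and a morphism
into `A → B` by the values of its uncurrying.
-/

/- Untyped lambda calculus in de Bruijn notation. -/
inductive Lam : Type where
  | var : ℕ → Lam
  | app : Lam → Lam → Lam
  | abs : Lam → Lam

namespace Lam

/-- Shift free de Bruijn indices `≥ k` by `d`. -/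
def lift (d k : ℕ) : Lam → Lam
  | .var i => .var (if i < k then i else i + d)
  | .app t u => .app (lift d k t) (lift d k u)
  | .abs t => .abs (lift d (k+1) t)

/-- Capture-avoiding substitution of `u` for variable `k`. -/
def subst (u : Lam) (k : ℕ) : Lam → Lam
  | .var i => if i < k then .var i else if i = k then lift k 0 u else .var (i-1)
  | .app t v => .app (subst u k t) (subst u k v)
  | .abs t => .abs (subst u (k+1) t)

/-- One-step β-reduction, closed under all contexts. -/
inductive Beta : Lam → Lam → Prop where
  | beta (t u : Lam) : Beta (.app (.abs t) u) (subst u 0 t)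
  | appL {t t'} (u : Lam) : Beta t t' → Beta (.app t u) (.app t' u)
  | appR (t : Lam) {u u'} : Beta u u' → Beta (.app t u) (.app t u')
  | absC {t t'} : Beta t t' → Beta (.abs t) (.abs t')

/-- β-equivalence: the reflexive symmetric transitive closure of β-reduction. -/
def BetaEq : Lam → Lam → Prop := Relation.EqvGen Beta

/-- Iterated abstraction `λ^k`. -/
def absN : ℕ → Lam → Lam
  | 0, t => t
  | k+1, t => .abs (absN k t)

/-- Church tuple `⟨t₁,…,t_k⟩ = λf. f t₁ … t_k`. -/
def tuple (ts : List Lam) : Lam :=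
  .abs ((ts.map (lift 1 0)).foldl .app (.var 0))

/-- Church projection `π_i^k = λp. p (λx₁…x_k. x_i)` (here `i` is 0-indexed:
`proj k i` projects the `(i+1)`-st of `k` components). -/
def proj (k i : ℕ) : Lam :=
  .abs (.app (.var 0) (absN k (.var (k - 1 - i))))

/-- Compatibility of a relation with β-equivalence. -/
def Compat (R : Lam → Lam → Prop) : Prop :=
  ∀ t t' t₀, R t t' → BetaEq t₀ t' → R t t₀

/-- A PER on lambda terms compatible with β-equivalence. -/
def IsPer (R : Lam → Lam → Prop) : Prop :=
  Symmetric R ∧ Transitive R ∧ Compat R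

/-- The arrow PER `A → B`. -/
def Arr (A B : Lam → Lam → Prop) : Lam → Lam → Prop :=
  fun t t' => ∀ u u', A u u' → B (.app t u) (.app t' u')

/-- The identity morphism is the class of `λx.x`. -/
def idTm : Lam := .abs (.var 0)

/-- Diagrammatic composition of (representatives of) morphisms:
`f ; g = λz. g (f z)`. -/
def compTm (f g : Lam) : Lam :=
  .abs (.app (lift 1 0 g) (.app (lift 1 0 f) (.var 0)))

/-- Church pair. -/
def pairTm (a b : Lam) : Lam := tuple [a, b]

/-- First projection `π₁`. -/
def fstTm : Lam := proj 2 0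

/-- Second projection `π₂`. -/
def sndTm : Lam := proj 2 1

/-- The product PER `A × B`. -/
def ProdRel2 (A B : Lam → Lam → Prop) : Lam → Lam → Prop :=
  fun t u => A (.app fstTm t) (.app fstTm u) ∧ B (.app sndTm t) (.app sndTm u)

/-- Pairing of morphisms: `⟨f,g⟩ = λx.⟨f x, g x⟩`. -/
def pairingTm (f g : Lam) : Lam :=
  .abs (pairTm (.app (lift 1 0 f) (.var 0)) (.app (lift 1 0 g) (.var 0)))

/-- The terminal PER: the total relation. -/
def UnoRel : Lam → Lam → Prop := fun _ _ => True

/-- Evaluation morphism `ev = λx.(π₁ x)(π₂ x)`. -/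
def evTm : Lam := .abs (.app (.app fstTm (.var 0)) (.app sndTm (.var 0)))

/-- Currying `Λ(f) = λx.λy. f ⟨x,y⟩`. -/
def curryTm (f : Lam) : Lam :=
  .abs (.abs (.app (lift 2 0 f) (pairTm (.var 1) (.var 0))))

@[simp]
theorem lift_zero : ∀ (t : Lam) (k : ℕ), lift 0 k t = t
  | .var i, k => by simp [lift]
  | .app t u, k => by simp [lift, lift_zero t, lift_zero u]
  | .abs t, k => by simp [lift, lift_zero t]

@[simp]
theorem lift_lift : ∀ (t : Lam) (j a b : ℕ), lift a j (lift b j t) = lift (a + b) j t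
  | .var i, j, a, b => by
    by_cases h : i < j
    · simp [lift, h]
    · simp only [lift, if_neg h]
      rw [if_neg (by omega)]
      congr 1
      omega
  | .app t u, j, a, b => by simp [lift, lift_lift t, lift_lift u]
  | .abs t, j, a, b => by simp [lift, lift_lift t]

theorem subst_lift : ∀ (t : Lam) (j k d : ℕ) (u : Lam), j ≤ k → k ≤ j + d →
    subst u k (lift (d + 1) j t) = lift d j t
  | .var i, j, k, d, u, h1, h2 => by
    simp only [lift]
    split
    · simp only [subst]; rw [if_pos (by omega)]
    · simp only [subst]
      rw [if_neg (by omega), if_neg (by omega)]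
      congr 1
  | .app t v, j, k, d, u, h1, h2 => by
    simp [lift, subst, subst_lift t j k d u h1 h2, subst_lift v j k d u h1 h2]
  | .abs t, j, k, d, u, h1, h2 => by
    simp [lift, subst, subst_lift t (j + 1) (k + 1) d u (by omega) (by omega)]

@[simp]
theorem subst_lift_self (t u : Lam) (k : ℕ) : subst u k (lift 1 k t) = t := by
  simpa using subst_lift t k k 0 u le_rfl (by omega)

@[simp]
theorem subst_one_lift_two (t u : Lam) : subst u 1 (lift 2 0 t) = lift 1 0 t :=
  subst_lift t 0 1 1 u (by omega) (by omega)

theorem pairTm_eq (a b : Lam) :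
    pairTm a b = .abs (.app (.app (.var 0) (lift 1 0 a)) (lift 1 0 b)) := rfl

namespace BetaEq

theorem refl (t : Lam) : BetaEq t t := Relation.EqvGen.refl t

theorem symm {t u : Lam} (h : BetaEq t u) : BetaEq u t := Relation.EqvGen.symm _ _ h

theorem trans {t u v : Lam} (h₁ : BetaEq t u) (h₂ : BetaEq u v) : BetaEq t v :=
  Relation.EqvGen.trans _ _ _ h₁ h₂

instance : Trans BetaEq BetaEq BetaEq := ⟨trans⟩

theorem map {F : Lam → Lam} (hF : ∀ {t t'}, Beta t t' → Beta (F t) (F t')) {t t' : Lam}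
    (h : BetaEq t t') : BetaEq (F t) (F t') := by
  induction h with
  | rel a b hab => exact .rel _ _ (hF hab)
  | refl a => exact refl _
  | symm a b _ ih => exact ih.symm
  | trans a b c _ _ ih₁ ih₂ => exact ih₁.trans ih₂

theorem app_left {t t' : Lam} (u : Lam) (h : BetaEq t t') : BetaEq (.app t u) (.app t' u) :=
  map (Beta.appL u) h

theorem app_right (t : Lam) {u u' : Lam} (h : BetaEq u u') : BetaEq (.app t u) (.app t u') :=
  map (Beta.appR t) h

theorem app {t t' u u' : Lam} (ht : BetaEq t t') (hu : BetaEq u u') :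
    BetaEq (.app t u) (.app t' u') :=
  (app_left u ht).trans (app_right t' hu)

end BetaEq

theorem betaEq_app_abs (t u : Lam) {s : Lam} (h : subst u 0 t = s) :
    BetaEq (.app (.abs t) u) s :=
  h ▸ .rel _ _ (Beta.beta t u)

theorem betaEq_app_idTm (u : Lam) : BetaEq (.app idTm u) u :=
  betaEq_app_abs _ _ (by simp [subst])

theorem betaEq_app_compTm (f g u : Lam) :
    BetaEq (.app (compTm f g) u) (.app g (.app f u)) :=
  betaEq_app_abs _ _ (by simp [subst])

theorem betaEq_app_pairTm (a b s : Lam) : BetaEq (.app (pairTm a b) s) (.app (.app s a) b) :=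
  betaEq_app_abs _ _ (by simp [subst])

theorem betaEq_fstTm_pairTm (a b : Lam) : BetaEq (.app fstTm (pairTm a b)) a :=
  calc BetaEq (.app fstTm (pairTm a b)) (.app (pairTm a b) (.abs (.abs (.var 1)))) :=
        betaEq_app_abs _ _ (by simp [subst, absN])
    BetaEq _ (.app (.app (.abs (.abs (.var 1))) a) b) := betaEq_app_pairTm a b _
    BetaEq _ (.app (.abs (lift 1 0 a)) b) := (betaEq_app_abs _ _ (by simp [subst])).app_left b
    BetaEq _ a := betaEq_app_abs _ _ (subst_lift_self a b 0)

theorem betaEq_sndTm_pairTm (a b : Lam) : BetaEq (.app sndTm (pairTm a b)) b :=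
  calc BetaEq (.app sndTm (pairTm a b)) (.app (pairTm a b) (.abs (.abs (.var 0)))) :=
        betaEq_app_abs _ _ (by simp [subst, absN])
    BetaEq _ (.app (.app (.abs (.abs (.var 0))) a) b) := betaEq_app_pairTm a b _
    BetaEq _ (.app idTm b) := (betaEq_app_abs _ _ (by simp [subst, idTm])).app_left b
    BetaEq _ b := betaEq_app_idTm b

theorem betaEq_app_pairingTm (f g u : Lam) :
    BetaEq (.app (pairingTm f g) u) (pairTm (.app f u) (.app g u)) :=
  betaEq_app_abs _ _ (by simp [pairTm_eq, lift, subst])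

theorem betaEq_fstTm_app_pairingTm (f g u : Lam) :
    BetaEq (.app fstTm (.app (pairingTm f g) u)) (.app f u) :=
  ((betaEq_app_pairingTm f g u).app_right fstTm).trans (betaEq_fstTm_pairTm _ _)

theorem betaEq_sndTm_app_pairingTm (f g u : Lam) :
    BetaEq (.app sndTm (.app (pairingTm f g) u)) (.app g u) :=
  ((betaEq_app_pairingTm f g u).app_right sndTm).trans (betaEq_sndTm_pairTm _ _)

theorem betaEq_app_evTm (p : Lam) :
    BetaEq (.app evTm p) (.app (.app fstTm p) (.app sndTm p)) :=
  betaEq_app_abs _ _ (by simp [fstTm, sndTm, proj, absN, subst])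

theorem betaEq_app_app_curryTm (f u v : Lam) :
    BetaEq (.app (.app (curryTm f) u) v) (.app f (pairTm u v)) :=
  calc BetaEq (.app (.app (curryTm f) u) v)
        (.app (.abs (.app (lift 1 0 f) (.abs (.app (.app (.var 0) (lift 2 0 u)) (.var 1))))) v) :=
        (betaEq_app_abs _ _ (by simp [pairTm_eq, lift, subst])).app_left v
    BetaEq _ (.app f (pairTm u v)) :=
        betaEq_app_abs _ _ (by simp [pairTm_eq, subst])

/-- `uncurryTm h = ev ∘ (h × id)`. -/
def uncurryTm (h : Lam) : Lam := compTm (pairingTm (compTm fstTm h) sndTm) evTm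

theorem betaEq_app_uncurryTm (h p : Lam) :
    BetaEq (.app (uncurryTm h) p) (.app (.app h (.app fstTm p)) (.app sndTm p)) :=
  calc BetaEq (.app (uncurryTm h) p) (.app evTm (.app (pairingTm (compTm fstTm h) sndTm) p)) :=
        betaEq_app_compTm _ _ _
    BetaEq _ _ := betaEq_app_evTm _
    BetaEq _ _ := .app ((betaEq_fstTm_app_pairingTm _ _ _).trans (betaEq_app_compTm _ _ _))
        (betaEq_sndTm_app_pairingTm _ _ _)

section

variable {A B C D : Lam → Lam → Prop}

theorem IsPer.congr {R : Lam → Lam → Prop} (hR : IsPer R) {t t' s s' : Lam}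
    (h : R t t') (hs : BetaEq s t) (hs' : BetaEq s' t') : R s s' :=
  let ⟨hsymm, _, hcompat⟩ := hR
  hsymm (hcompat _ _ _ (hsymm (hcompat _ _ _ h hs')) hs)

theorem isPer_arr (hA : IsPer A) (hB : IsPer B) : IsPer (Arr A B) := by
  obtain ⟨hAs, hAt, -⟩ := hA
  obtain ⟨hBs, hBt, hBc⟩ := hB
  refine ⟨?_, ?_, ?_⟩
  · exact fun t t' h u u' hu => hBs (h u' u (hAs hu))
  · exact fun t t' t'' h₁ h₂ u u' hu => hBt (h₁ u u (hAt hu (hAs hu))) (h₂ u u' hu)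
  · exact fun t t' t₀ h hbe u u' hu => hBc _ _ _ (h u u' hu) (hbe.app_left u')

theorem isPer_prodRel2 (hA : IsPer A) (hB : IsPer B) : IsPer (ProdRel2 A B) := by
  obtain ⟨hAs, hAt, hAc⟩ := hA
  obtain ⟨hBs, hBt, hBc⟩ := hB
  refine ⟨?_, ?_, ?_⟩
  · exact fun t u h => ⟨hAs h.1, hBs h.2⟩
  · exact fun t u v h₁ h₂ => ⟨hAt h₁.1 h₂.1, hBt h₁.2 h₂.2⟩
  · exact fun t u t₀ h hbe =>
      ⟨hAc _ _ _ h.1 (hbe.app_right fstTm), hBc _ _ _ h.2 (hbe.app_right sndTm)⟩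

theorem isPer_unoRel : IsPer UnoRel :=
  ⟨fun _ _ _ => trivial, fun _ _ _ _ _ => trivial, fun _ _ _ _ _ => trivial⟩

theorem prodRel2_pairTm (hA : IsPer A) (hB : IsPer B) {a a' b b' : Lam} (ha : A a a')
    (hb : B b b') : ProdRel2 A B (pairTm a b) (pairTm a' b') :=
  ⟨hA.congr ha (betaEq_fstTm_pairTm a b) (betaEq_fstTm_pairTm a' b'),
    hB.congr hb (betaEq_sndTm_pairTm a b) (betaEq_sndTm_pairTm a' b')⟩

theorem arr_of_betaEq_app (hB : IsPer B) {f f' g g' : Lam} (h : Arr A B f f')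
    (hg : ∀ u, BetaEq (.app g u) (.app f u)) (hg' : ∀ u, BetaEq (.app g' u) (.app f' u)) :
    Arr A B g g' :=
  fun u u' hu => hB.congr (h u u' hu) (hg u) (hg' u')

theorem arr_idTm (hA : IsPer A) : Arr A A idTm idTm :=
  fun u u' hu => hA.congr hu (betaEq_app_idTm u) (betaEq_app_idTm u')

theorem arr_compTm (hC : IsPer C) {f f' g g' : Lam} (hf : Arr A B f f') (hg : Arr B C g g') :
    Arr A C (compTm f g) (compTm f' g') :=
  fun u u' hu => hC.congr (hg _ _ (hf u u' hu)) (betaEq_app_compTm f g u)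
    (betaEq_app_compTm f' g' u')

theorem arr_idTm_compTm (hB : IsPer B) {f : Lam} (hf : Arr A B f f) :
    Arr A B (compTm idTm f) f :=
  arr_of_betaEq_app hB hf
    (fun u => (betaEq_app_compTm idTm f u).trans ((betaEq_app_idTm u).app_right f))
    fun _ => .refl _

theorem arr_compTm_idTm (hB : IsPer B) {f : Lam} (hf : Arr A B f f) :
    Arr A B (compTm f idTm) f :=
  arr_of_betaEq_app hB hf (fun u => (betaEq_app_compTm f idTm u).trans (betaEq_app_idTm _))
    fun _ => .refl _

theorem arr_compTm_assoc (hD : IsPer D) {f g h : Lam} (hf : Arr A B f f) (hg : Arr B C g g)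
    (hh : Arr C D h h) : Arr A D (compTm (compTm f g) h) (compTm f (compTm g h)) :=
  fun u u' hu => hD.congr (hh _ _ (hg _ _ (hf u u' hu)))
    ((betaEq_app_compTm _ _ _).trans ((betaEq_app_compTm _ _ _).app_right h))
    ((betaEq_app_compTm _ _ _).trans (betaEq_app_compTm _ _ _))

theorem arr_pairingTm (hA : IsPer A) (hB : IsPer B) {f f' g g' : Lam} (hf : Arr C A f f')
    (hg : Arr C B g g') : Arr C (ProdRel2 A B) (pairingTm f g) (pairingTm f' g') :=
  fun u u' hu => (isPer_prodRel2 hA hB).congr (prodRel2_pairTm hA hB (hf u u' hu) (hg u u' hu))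
    (betaEq_app_pairingTm f g u) (betaEq_app_pairingTm f' g' u')

theorem arr_pairingTm_fstTm (hA : IsPer A) {f g : Lam} (hf : Arr C A f f) :
    Arr C A (compTm (pairingTm f g) fstTm) f :=
  arr_of_betaEq_app hA hf
    (fun u => (betaEq_app_compTm _ _ u).trans (betaEq_fstTm_app_pairingTm f g u))
    fun _ => .refl _

theorem arr_pairingTm_sndTm (hB : IsPer B) {f g : Lam} (hg : Arr C B g g) :
    Arr C B (compTm (pairingTm f g) sndTm) g :=
  arr_of_betaEq_app hB hg
    (fun u => (betaEq_app_compTm _ _ u).trans (betaEq_sndTm_app_pairingTm f g u))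
    fun _ => .refl _

theorem arr_pairingTm_unique (hA : IsPer A) (hB : IsPer B) {f g h : Lam}
    (hf : Arr C A (compTm h fstTm) f) (hg : Arr C B (compTm h sndTm) g) :
    Arr C (ProdRel2 A B) h (pairingTm f g) :=
  fun u u' hu =>
    ⟨hA.congr (hf u u' hu) (betaEq_app_compTm h fstTm u).symm
      (betaEq_fstTm_app_pairingTm f g u'),
    hB.congr (hg u u' hu) (betaEq_app_compTm h sndTm u).symm
      (betaEq_sndTm_app_pairingTm f g u')⟩

theorem arr_evTm (hB : IsPer B) : Arr (ProdRel2 (Arr A B) A) B evTm evTm :=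
  fun p q hpq => hB.congr (hpq.1 _ _ hpq.2) (betaEq_app_evTm p) (betaEq_app_evTm q)

theorem arr_curryTm (hC : IsPer C) (hA : IsPer A) (hB : IsPer B) {f f' : Lam}
    (hf : Arr (ProdRel2 C A) B f f') : Arr C (Arr A B) (curryTm f) (curryTm f') :=
  fun u u' hu v v' hv => hB.congr (hf _ _ (prodRel2_pairTm hC hA hu hv))
    (betaEq_app_app_curryTm f u v) (betaEq_app_app_curryTm f' u' v')

theorem arr_uncurryTm_curryTm (hC : IsPer C) (hA : IsPer A) (hB : IsPer B) {f : Lam}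
    (hf : Arr (ProdRel2 C A) B f f) : Arr (ProdRel2 C A) B (uncurryTm (curryTm f)) f := by
  intro p p' hp
  have hpair : ProdRel2 C A (pairTm (.app fstTm p) (.app sndTm p)) p' :=
    ⟨hC.congr hp.1 (betaEq_fstTm_pairTm _ _) (.refl _),
      hA.congr hp.2 (betaEq_sndTm_pairTm _ _) (.refl _)⟩
  exact hB.congr (hf _ _ hpair)
    ((betaEq_app_uncurryTm _ p).trans (betaEq_app_app_curryTm f _ _)) (.refl _)

theorem arr_curryTm_unique (hC : IsPer C) (hA : IsPer A) (hB : IsPer B) {f h : Lam}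
    (hh : Arr (ProdRel2 C A) B (uncurryTm h) f) : Arr C (Arr A B) h (curryTm f) :=
  fun u u' hu v v' hv => hB.congr (hh _ _ (prodRel2_pairTm hC hA hu hv))
    ((betaEq_app_uncurryTm h _).trans
      (.app ((betaEq_fstTm_pairTm u v).app_right h) (betaEq_sndTm_pairTm u v))).symm
    (betaEq_app_app_curryTm f u' v')

end

/-- A morphism `A → B` is represented by any `f` with `Arr A B f f`; two representatives give the
same morphism iff they are related by `Arr A B`. -/
theorem per_cartesian_closed :
    ∀ A B C D : Lam → Lam → Prop, IsPer A → IsPer B → IsPer C → IsPer D →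
      -- the arrow and product constructions yield PERs
      (IsPer (Arr A B) ∧ IsPer (ProdRel2 A B) ∧ IsPer UnoRel) ∧
      -- identity morphism
      (Arr A A idTm idTm) ∧
      -- composition is well defined on classes
      (∀ f f' g g', Arr A B f f' → Arr B C g g' →
        Arr A C (compTm f g) (compTm f' g')) ∧
      -- identity laws
      (∀ f, Arr A B f f →
        Arr A B (compTm idTm f) f ∧ Arr A B (compTm f idTm) f) ∧
      -- associativity of composition
      (∀ f g h, Arr A B f f → Arr B C g g → Arr C D h h →
        Arr A D (compTm (compTm f g) h) (compTm f (compTm g h))) ∧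
      -- the total relation is terminal
      (Arr A UnoRel idTm idTm ∧
        ∀ f g, Arr A UnoRel f f → Arr A UnoRel g g → Arr A UnoRel f g) ∧
      -- projections are morphisms
      (Arr (ProdRel2 A B) A fstTm fstTm ∧ Arr (ProdRel2 A B) B sndTm sndTm) ∧
      -- pairing: existence, commutation and uniqueness (universal property)
      (∀ f g, Arr C A f f → Arr C B g g →
        Arr C (ProdRel2 A B) (pairingTm f g) (pairingTm f g) ∧
        Arr C A (compTm (pairingTm f g) fstTm) f ∧
        Arr C B (compTm (pairingTm f g) sndTm) g ∧
        ∀ h, Arr C (ProdRel2 A B) h h →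
          Arr C A (compTm h fstTm) f → Arr C B (compTm h sndTm) g →
          Arr C (ProdRel2 A B) h (pairingTm f g)) ∧
      -- evaluation is a morphism (A→B) × A ⟶ B
      (Arr (ProdRel2 (Arr A B) A) B evTm evTm) ∧
      -- currying: existence, commutation (ev ∘ (Λf × id) = f) and uniqueness
      (∀ f, Arr (ProdRel2 C A) B f f →
        Arr C (Arr A B) (curryTm f) (curryTm f) ∧
        Arr (ProdRel2 C A) B
          (compTm (pairingTm (compTm fstTm (curryTm f)) sndTm) evTm) f ∧
        ∀ h, Arr C (Arr A B) h h →
          Arr (ProdRel2 C A) B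
            (compTm (pairingTm (compTm fstTm h) sndTm) evTm) f →
          Arr C (Arr A B) h (curryTm f)) := by
  intro A B C D hA hB hC hD
  exact ⟨⟨isPer_arr hA hB, isPer_prodRel2 hA hB, isPer_unoRel⟩,
    arr_idTm hA,
    fun _ _ _ _ => arr_compTm hC,
    fun _ hf => ⟨arr_idTm_compTm hB hf, arr_compTm_idTm hB hf⟩,
    fun _ _ _ => arr_compTm_assoc hD,
    ⟨fun _ _ _ => trivial, fun _ _ _ _ _ _ _ => trivial⟩,
    ⟨fun _ _ hp => hp.1, fun _ _ hp => hp.2⟩,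
    fun _ _ hf hg => ⟨arr_pairingTm hA hB hf hg, arr_pairingTm_fstTm hA hf,
      arr_pairingTm_sndTm hB hg, fun _ _ => arr_pairingTm_unique hA hB⟩,
    arr_evTm hB,
    fun _ hf => ⟨arr_curryTm hC hA hB hf, arr_uncurryTm_curryTm hC hA hB hf,
      fun _ _ => arr_curryTm_unique hC hA hB⟩⟩

end Lam
end

section
/- In a Cartesian closed category with object D, morphisms app : D → D^D and lam : D^D → D forming an isomorphism (lam;app = id and app;lam = id), a point fail : 1 → D, points c_i : 1 → D, and a morphism case : D^n × D → D, the diagram (D3) expressing the CaseApp rule commutes if and only if the diagram (D4) expressing the CaseLam rule commutes. -/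
open CategoryTheory Limits MonoidalCategory CartesianClosed

noncomputable section

variable {C : Type*} [Category C] [CartesianMonoidalCategory C] [MonoidalClosed C]

instance braidedOfCartesianMonoidal : BraidedCategory C :=
  BraidedCategory.ofCartesianMonoidalCategory

/-- Evaluation in the convention `B^A × A ⟶ B`. -/
def ev' (A B : C) : (A ⟹ B) ⊗ A ⟶ B := (β_ (A ⟹ B) A).hom ≫ (ihom.ev A).app B

/-- Currying in the convention `Y × A ⟶ B` gives `Y ⟶ B^A`. -/
def curry' {Y A B : C} (f : Y ⊗ A ⟶ B) : Y ⟶ A ⟹ B :=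
  MonoidalClosed.curry ((β_ A Y).hom ≫ f)

/-- Diagram (D3), expressing the CaseApp rule: both ways around the square
`(D^n × D) × D ⟶ D` coincide. -/
def DiagD3 {n : ℕ} (D : C) (cse : (∏ᶜ fun _ : Fin n => D) ⊗ D ⟶ D)
    (ap : D ⟶ D ⟹ D) : Prop :=
  (cse ⊗ₘ 𝟙 D) ≫ (ap ⊗ₘ 𝟙 D) ≫ ev' D D =
    (α_ (∏ᶜ fun _ : Fin n => D) D D).hom ≫
      (𝟙 (∏ᶜ fun _ : Fin n => D) ⊗ₘ (ap ⊗ₘ 𝟙 D)) ≫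
      (𝟙 (∏ᶜ fun _ : Fin n => D) ⊗ₘ ev' D D) ≫ cse

/-- The morphism `case♯ = Λ(≅ ; (id × ev) ; case)`. -/
def caseSharp {n : ℕ} (D : C) (cse : (∏ᶜ fun _ : Fin n => D) ⊗ D ⟶ D) :
    (∏ᶜ fun _ : Fin n => D) ⊗ (D ⟹ D) ⟶ D ⟹ D :=
  curry' ((α_ (∏ᶜ fun _ : Fin n => D) (D ⟹ D) D).hom ≫
    (𝟙 (∏ᶜ fun _ : Fin n => D) ⊗ₘ ev' D D) ≫ cse)

/-- Diagram (D4), expressing the CaseLam rule. -/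
def DiagD4 {n : ℕ} (D : C) (cse : (∏ᶜ fun _ : Fin n => D) ⊗ D ⟶ D)
    (lm : (D ⟹ D) ⟶ D) : Prop :=
  caseSharp D cse ≫ lm = (𝟙 (∏ᶜ fun _ : Fin n => D) ⊗ₘ lm) ≫ cse

/-!
Both diagrams are equivalent to `case ; app = (id × app) ; case♯`. For (D3), its two sides are
the uncurried forms of these two morphisms; for (D4), compose with the isomorphism `app` on
the right and with `id × app` on the left.
-/

lemma tensorHom_id_comp_ev' {Y A B : C} (f : Y ⟶ A ⟹ B) :
    (f ⊗ₘ 𝟙 A) ≫ ev' A B = (β_ Y A).hom ≫ MonoidalClosed.uncurry f := by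
  rw [ev', ← Category.assoc, BraidedCategory.braiding_naturality]
  simp [MonoidalClosed.uncurry_eq, MonoidalCategory.tensorHom_def]

lemma eq_curry'_iff {Y A B : C} (f : Y ⟶ A ⟹ B) (g : Y ⊗ A ⟶ B) :
    f = curry' g ↔ (f ⊗ₘ 𝟙 A) ≫ ev' A B = g := by
  rw [curry', MonoidalClosed.eq_curry_iff, tensorHom_id_comp_ev', ← Iso.inv_comp_eq,
    SymmetricCategory.braiding_swap_eq_inv_braiding]

lemma curry'_tensorHom_id_comp_ev' {Y A B : C} (g : Y ⊗ A ⟶ B) :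
    (curry' g ⊗ₘ 𝟙 A) ≫ ev' A B = g :=
  (eq_curry'_iff _ _).mp rfl

lemma comp_curry' {X Y A B : C} (h : X ⟶ Y) (g : Y ⊗ A ⟶ B) :
    h ≫ curry' g = curry' ((h ⊗ₘ 𝟙 A) ≫ g) := by
  rw [eq_curry'_iff, comp_tensor_id, Category.assoc, curry'_tensorHom_id_comp_ev']

lemma diagD3_iff_comp_eq {n : ℕ} (D : C) (cse : (∏ᶜ fun _ : Fin n => D) ⊗ D ⟶ D)
    (ap : D ⟶ D ⟹ D) :
    DiagD3 D cse ap ↔ cse ≫ ap = (𝟙 (∏ᶜ fun _ : Fin n => D) ⊗ₘ ap) ≫ caseSharp D cse := by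
  rw [caseSharp, comp_curry', eq_curry'_iff, comp_tensor_id, Category.assoc, DiagD3,
    ← associator_naturality_assoc]

lemma diagD4_iff_comp_eq {n : ℕ} (D : C) (cse : (∏ᶜ fun _ : Fin n => D) ⊗ D ⟶ D)
    (e : D ≅ D ⟹ D) :
    DiagD4 D cse e.inv ↔
      cse ≫ e.hom = (𝟙 (∏ᶜ fun _ : Fin n => D) ⊗ₘ e.hom) ≫ caseSharp D cse := by
  rw [DiagD4, Iso.comp_inv_eq, id_tensorHom, id_tensorHom, Category.assoc,
    ← whiskerLeftIso_inv, ← whiskerLeftIso_hom, ← Iso.inv_comp_eq, eq_comm]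

theorem diagD3_iff_diagD4_general {n : ℕ} (D : C)
    (ap : D ⟶ D ⟹ D) (lm : (D ⟹ D) ⟶ D)
    (h₁ : lm ≫ ap = 𝟙 (D ⟹ D)) (h₂ : ap ≫ lm = 𝟙 D)
    (cse : (∏ᶜ fun _ : Fin n => D) ⊗ D ⟶ D) :
    DiagD3 D cse ap ↔ DiagD4 D cse lm :=
  (diagD3_iff_comp_eq D cse ap).trans (diagD4_iff_comp_eq D cse ⟨ap, lm, h₂, h₁⟩).symm

/-- In a Cartesian closed category with an object `D`, morphisms
`app : D ⟶ D^D` and `lam : D^D ⟶ D` forming an isomorphism, a point `fail`,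
points `c_i`, and a morphism `case : D^n × D ⟶ D`, the diagram (D3)
(CaseApp) commutes if and only if the diagram (D4) (CaseLam) commutes. -/
theorem diagD3_iff_diagD4 {n : ℕ} (D : C)
    (ap : D ⟶ D ⟹ D) (lm : (D ⟹ D) ⟶ D)
    (h₁ : lm ≫ ap = 𝟙 (D ⟹ D)) (h₂ : ap ≫ lm = 𝟙 D)
    (fail : 𝟙_ C ⟶ D) (cs : Fin n → (𝟙_ C ⟶ D))
    (cse : (∏ᶜ fun _ : Fin n => D) ⊗ D ⟶ D) :
    DiagD3 D cse ap ↔ DiagD4 D cse lm :=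
  diagD3_iff_diagD4_general D ap lm h₁ h₂ cse

end
end
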